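/- arXiv:1204.3982 — 5 statements merged into one kernel-verified Lean document; each statement's English description precedes it below -/
import Mathlib

section
/- Let f : ℝ^n → ℝ be convex and differentiable with L-Lipschitz continuous gradient (L > 0), attaining its minimum f* at a point x*. Consider Nesterov's accelerated gradient scheme with step size t = 1/L and q = 0: starting from x⁰ = y⁰, θ₀ = 1, iterate x^{k+1} = y^k − (1/L)∇f(y^k), θ_{k+1} the positive root of θ_{k+1}² = (1 − θ_{k+1})θ_k², β_{k+1} = θ_k(1 − θ_k)/(θ_k² + θ_{k+1}), y^{k+1} = x^{k+1} + β_{k+1}(x^{k+1} − x^k). Then for all k ≥ 0, f(x^k) − f* ≤ 4L‖x⁰ − x*‖² / (k + 2)². -/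
open Set
open scoped RealInnerProductSpace

/-!
With `v` the auxiliary sequence for which `y k = (1 - θ k) • x k + θ k • v k`, one gradient step
combined with convexity at `y k` (towards `x k` and towards `x*`) shows that
`(f (x (k+1)) - f*) / θ k ^ 2 + L/2 ‖v (k+1) - x*‖²` is nonincreasing, because the recursion
gives `(1 - θ (k+1)) / θ (k+1) ^ 2 = 1 / θ k ^ 2`. Hence `f (x (k+1)) - f* ≤ θ k ^ 2 L/2 ‖x 0 - x*‖²`,
and the recursion also gives `1 / θ (k+1) ≥ 1 / θ k + 1/2`, i.e. `θ k ≤ 2 / (k+2)`.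
For `x 1` this bound alone is too weak; there `v 1 = x 1`, and averaging with
`f (x 1) - f* ≤ L/2 ‖x 1 - x*‖²` gives `L/4 ‖x 0 - x*‖²`.
-/

section LipschitzGradient

variable {E : Type*} [NormedAddCommGroup E] [InnerProductSpace ℝ E] [CompleteSpace E]
  {f : E → ℝ}

theorem IsLocalMin.gradient_eq_zero {a : E} (h : IsLocalMin f a) : gradient f a = 0 := by
  simp [gradient, h.fderiv_eq_zero]

theorem Differentiable.hasDerivAt_comp_add_smul (hf : Differentiable ℝ f) (a v : E) (t : ℝ) :
    HasDerivAt (fun s : ℝ => f (a + s • v)) ⟪gradient f (a + t • v), v⟫ t := by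
  have hline : HasDerivAt (fun s : ℝ => a + s • v) v t := by
    simpa using ((hasDerivAt_id t).smul_const v).const_add a
  simpa [Function.comp_def] using
    (hf _).hasGradientAt.hasFDerivAt.comp_hasDerivAt t hline

theorem ConvexOn.add_inner_gradient_le (hconv : ConvexOn ℝ univ f) (hf : Differentiable ℝ f)
    (a b : E) : f a + ⟪gradient f a, b - a⟫ ≤ f b := by
  have hline : ConvexOn ℝ univ (fun s : ℝ => f (a + s • (b - a))) := by
    simpa [Function.comp_def, AffineMap.lineMap_apply_module', add_comm] using
      hconv.comp_affineMap (AffineMap.lineMap a b)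
  have h := hline.le_slope_of_hasDerivAt (mem_univ 0) (mem_univ 1) one_pos
    (by simpa using hf.hasDerivAt_comp_add_smul a (b - a) 0)
  simp only [slope_def_field, zero_smul, add_zero, one_smul, add_sub_cancel, sub_zero,
    div_one] at h
  rw [inner_gradient_left, map_sub]
  linarith

theorem le_add_inner_gradient_add_sq_of_lipschitz (hf : Differentiable ℝ f) {L : ℝ}
    (hlip : ∀ a b, ‖gradient f a - gradient f b‖ ≤ L * ‖a - b‖) (a b : E) :
    f b ≤ f a + ⟪gradient f a, b - a⟫ + L / 2 * ‖b - a‖ ^ 2 := by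
  set v := b - a
  -- the claim is `ψ 1 ≤ ψ 0`; the Lipschitz bound makes `ψ` antitone on `[0, 1]`
  set ψ : ℝ → ℝ := fun t => f (a + t • v) - t * ⟪gradient f a, v⟫ - L / 2 * t ^ 2 * ‖v‖ ^ 2
  have hψ (t : ℝ) :
      HasDerivAt ψ (⟪gradient f (a + t • v) - gradient f a, v⟫ - L * t * ‖v‖ ^ 2) t := by
    refine (((hf.hasDerivAt_comp_add_smul a v t).sub
      ((hasDerivAt_id t).mul_const ⟪gradient f a, v⟫)).sub
      (((hasDerivAt_pow 2 t).const_mul (L / 2)).mul_const (‖v‖ ^ 2))).congr_deriv ?_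
    simp only [inner_sub_left, Nat.cast_ofNat]
    ring
  have hψ' : ∀ t ∈ interior (Icc (0 : ℝ) 1),
      ⟪gradient f (a + t • v) - gradient f a, v⟫ - L * t * ‖v‖ ^ 2 ≤ 0 := by
    intro t ht
    rw [interior_Icc] at ht
    have := calc ⟪gradient f (a + t • v) - gradient f a, v⟫
        ≤ ‖gradient f (a + t • v) - gradient f a‖ * ‖v‖ := real_inner_le_norm _ _
      _ ≤ L * ‖t • v‖ * ‖v‖ := by gcongr; simpa using hlip (a + t • v) a
      _ = L * t * ‖v‖ ^ 2 := by rw [norm_smul, Real.norm_of_nonneg ht.1.le]; ring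
    linarith
  have hanti := antitoneOn_of_hasDerivWithinAt_nonpos (convex_Icc 0 1)
    (HasDerivAt.continuousOn fun t _ => hψ t) (fun t _ => (hψ t).hasDerivWithinAt) hψ'
  have := hanti (left_mem_Icc.2 zero_le_one) (right_mem_Icc.2 zero_le_one) zero_le_one
  simp only [ψ, v, one_smul, add_sub_cancel, zero_smul, add_zero] at this
  linarith

theorem apply_sub_one_div_smul_gradient_le (hf : Differentiable ℝ f) {L : ℝ} (hL : 0 < L)
    (hlip : ∀ a b, ‖gradient f a - gradient f b‖ ≤ L * ‖a - b‖) (a : E) :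
    f (a - (1 / L) • gradient f a) ≤ f a - 1 / (2 * L) * ‖gradient f a‖ ^ 2 := by
  have h := le_add_inner_gradient_add_sq_of_lipschitz hf hlip a (a - (1 / L) • gradient f a)
  rw [sub_sub_cancel_left, inner_neg_right, norm_neg, real_inner_smul_right,
    real_inner_self_eq_norm_sq, norm_smul, Real.norm_of_nonneg (by positivity)] at h
  convert h using 1
  field_simp
  ring

theorem sub_le_of_gradient_eq_zero (hf : Differentiable ℝ f) {L : ℝ}
    (hlip : ∀ a b, ‖gradient f a - gradient f b‖ ≤ L * ‖a - b‖) {z : E}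
    (hz : gradient f z = 0) (a : E) : f a - f z ≤ L / 2 * ‖a - z‖ ^ 2 := by
  have := le_add_inner_gradient_add_sq_of_lipschitz hf hlip z a
  rw [hz, inner_zero_left] at this
  linarith

end LipschitzGradient

section Momentum

theorem inv_add_half_le_inv {a b : ℝ} (ha : 0 < a) (hb : 0 < b)
    (h : b ^ 2 = (1 - b) * a ^ 2) : a⁻¹ + 1 / 2 ≤ b⁻¹ := by
  have hba : b ≤ a := by nlinarith
  rw [← sub_nonneg]
  have key : b⁻¹ - (a⁻¹ + 1 / 2) = (a - b) / (2 * (a + b)) := by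
    field_simp
    linear_combination (-2) * h
  rw [key]
  positivity

variable {θ : ℕ → ℝ}

theorem nesterov_theta_pos (hθ0 : θ 0 = 1)
    (hθ : ∀ k, 0 < θ (k + 1) ∧ θ (k + 1) ^ 2 = (1 - θ (k + 1)) * θ k ^ 2) (k : ℕ) :
    0 < θ k := by
  cases k with
  | zero => simp [hθ0]
  | succ k => exact (hθ k).1

theorem nesterov_theta_le_one (hθ0 : θ 0 = 1)
    (hθ : ∀ k, 0 < θ (k + 1) ∧ θ (k + 1) ^ 2 = (1 - θ (k + 1)) * θ k ^ 2) (k : ℕ) :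
    θ k ≤ 1 := by
  cases k with
  | zero => simp [hθ0]
  | succ k =>
    have hprod : 0 < (1 - θ (k + 1)) * θ k ^ 2 := (hθ k).2 ▸ pow_pos (hθ k).1 2
    linarith [pos_of_mul_pos_left hprod (sq_nonneg _)]

theorem nesterov_half_le_inv_theta (hθ0 : θ 0 = 1)
    (hθ : ∀ k, 0 < θ (k + 1) ∧ θ (k + 1) ^ 2 = (1 - θ (k + 1)) * θ k ^ 2) (k : ℕ) :
    ((k : ℝ) + 2) / 2 ≤ (θ k)⁻¹ := by
  induction k with
  | zero => simp [hθ0]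
  | succ k ih =>
    have := inv_add_half_le_inv (nesterov_theta_pos hθ0 hθ k) (hθ k).1 (hθ k).2
    push_cast
    linarith

theorem nesterov_theta_le (hθ0 : θ 0 = 1)
    (hθ : ∀ k, 0 < θ (k + 1) ∧ θ (k + 1) ^ 2 = (1 - θ (k + 1)) * θ k ^ 2) (k : ℕ) :
    θ k ≤ 2 / (k + 2) := by
  rw [← inv_div, le_inv_comm₀ (nesterov_theta_pos hθ0 hθ k) (by positivity)]
  exact nesterov_half_le_inv_theta hθ0 hθ k

end Momentum

section NesterovAux

variable {E : Type*} [AddCommGroup E] [Module ℝ E]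

/-- The auxiliary sequence `v` of the analysis: `x (k+1) = (1 - θ k) • x k + θ k • v (k+1)`. -/
noncomputable def nesterovAux (x : ℕ → E) (θ : ℕ → ℝ) : ℕ → E
  | 0 => x 0
  | k + 1 => x k + (θ k)⁻¹ • (x (k + 1) - x k)

theorem eq_convexComb_nesterovAux {x y : ℕ → E} {θ β : ℕ → ℝ} (hy0 : y 0 = x 0)
    (hθ0 : θ 0 = 1) (hθ : ∀ k, 0 < θ (k + 1) ∧ θ (k + 1) ^ 2 = (1 - θ (k + 1)) * θ k ^ 2)
    (hβ : ∀ k, β (k + 1) = θ k * (1 - θ k) / (θ k ^ 2 + θ (k + 1)))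
    (hy : ∀ k, y (k + 1) = x (k + 1) + β (k + 1) • (x (k + 1) - x k)) (k : ℕ) :
    y k = (1 - θ k) • x k + θ k • nesterovAux x θ k := by
  cases k with
  | zero => simp [hy0, hθ0, nesterovAux]
  | succ k =>
    have hpos := nesterov_theta_pos hθ0 hθ k
    have hβ' : β (k + 1) = θ (k + 1) * ((θ k)⁻¹ - 1) := by
      rw [hβ k, div_eq_iff (by nlinarith [(hθ k).1])]
      field_simp
      linear_combination (θ k - 1) * (hθ k).2
    rw [hy k, hβ', nesterovAux]
    module

end NesterovAux

section Nesterov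

variable {E : Type*} [NormedAddCommGroup E] [InnerProductSpace ℝ E] [CompleteSpace E]
  {f : E → ℝ} {L : ℝ}

theorem nesterov_step_le (hconv : ConvexOn ℝ univ f) (hf : Differentiable ℝ f) (hL : 0 < L)
    (hlip : ∀ a b, ‖gradient f a - gradient f b‖ ≤ L * ‖a - b‖) {θ : ℝ} (hθ0 : 0 < θ)
    (hθ1 : θ ≤ 1) {x v y x' : E} (hy : y = (1 - θ) • x + θ • v)
    (hx' : x' = y - (1 / L) • gradient f y) (z : E) :
    f x' - f z ≤ (1 - θ) * (f x - f z)
      + L * θ ^ 2 / 2 * (‖v - z‖ ^ 2 - ‖x + θ⁻¹ • (x' - x) - z‖ ^ 2) := by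
  set g := gradient f y
  have hdesc : f x' ≤ f y - 1 / (2 * L) * ‖g‖ ^ 2 :=
    hx' ▸ apply_sub_one_div_smul_gradient_le hf hL hlip y
  have hx_conv := hconv.add_inner_gradient_le hf y x
  have hz_conv := hconv.add_inner_gradient_le hf y z
  have hv' : x + θ⁻¹ • (x' - x) - z = (v - z) - (θ⁻¹ * (1 / L)) • g := by
    rw [hx', hy]
    match_scalars <;> field_simp
    ring
  have hsplit : (1 - θ) • (x - y) + θ • (z - y) = -(θ • (v - z)) := by
    rw [hy]; module
  have hinner : (1 - θ) * ⟪g, x - y⟫ + θ * ⟪g, z - y⟫ = -(θ * ⟪g, v - z⟫) := by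
    rw [← real_inner_smul_right, ← real_inner_smul_right, ← inner_add_right, hsplit,
      inner_neg_right, real_inner_smul_right]
  have hnorm : L * θ ^ 2 / 2 * (‖v - z‖ ^ 2 - ‖x + θ⁻¹ • (x' - x) - z‖ ^ 2)
      = θ * ⟪g, v - z⟫ - 1 / (2 * L) * ‖g‖ ^ 2 := by
    rw [hv', norm_sub_sq_real (v - z), real_inner_smul_right, norm_smul, real_inner_comm,
      Real.norm_of_nonneg (by positivity)]
    field_simp
    ring
  nlinarith [mul_le_mul_of_nonneg_left hx_conv (sub_nonneg.2 hθ1),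
    mul_le_mul_of_nonneg_left hz_conv hθ0.le]

theorem nesterov_gap_le (hconv : ConvexOn ℝ univ f)
    (hf : Differentiable ℝ f) (hL : 0 < L)
    (hlip : ∀ a b, ‖gradient f a - gradient f b‖ ≤ L * ‖a - b‖) {x y : ℕ → E} {θ : ℕ → ℝ}
    (hθ0 : θ 0 = 1) (hθ : ∀ k, 0 < θ (k + 1) ∧ θ (k + 1) ^ 2 = (1 - θ (k + 1)) * θ k ^ 2)
    (hx : ∀ k, x (k + 1) = y k - (1 / L) • gradient f (y k))
    (hyv : ∀ k, y k = (1 - θ k) • x k + θ k • nesterovAux x θ k) (z : E) (k : ℕ) :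
    f (x (k + 1)) - f z
      ≤ θ k ^ 2 * (L / 2) * (‖x 0 - z‖ ^ 2 - ‖nesterovAux x θ (k + 1) - z‖ ^ 2) := by
  have step (k : ℕ) : f (x (k + 1)) - f z ≤ (1 - θ k) * (f (x k) - f z)
      + L * θ k ^ 2 / 2 * (‖nesterovAux x θ k - z‖ ^ 2 - ‖nesterovAux x θ (k + 1) - z‖ ^ 2) :=
    nesterov_step_le hconv hf hL hlip (nesterov_theta_pos hθ0 hθ k)
    (nesterov_theta_le_one hθ0 hθ k) (hyv k) (hx k) z
  induction k with
  | zero =>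
    have := step 0
    simp only [hθ0, sub_self, zero_mul, zero_add, nesterovAux] at this ⊢
    linarith
  | succ k ih =>
    have h1 : 0 ≤ 1 - θ (k + 1) := sub_nonneg.2 (nesterov_theta_le_one hθ0 hθ (k + 1))
    have hθsq : (1 - θ (k + 1)) * θ k ^ 2 = θ (k + 1) ^ 2 := (hθ k).2.symm
    have := step (k + 1)
    have := mul_le_mul_of_nonneg_left ih h1
    rw [← mul_assoc, ← mul_assoc, hθsq] at this
    linarith

theorem nesterov_gap_le_div_sq (hconv : ConvexOn ℝ univ f)
    (hf : Differentiable ℝ f) (hL : 0 < L)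
    (hlip : ∀ a b, ‖gradient f a - gradient f b‖ ≤ L * ‖a - b‖) {x y : ℕ → E} {θ : ℕ → ℝ}
    (hθ0 : θ 0 = 1) (hθ : ∀ k, 0 < θ (k + 1) ∧ θ (k + 1) ^ 2 = (1 - θ (k + 1)) * θ k ^ 2)
    (hx : ∀ k, x (k + 1) = y k - (1 / L) • gradient f (y k))
    (hyv : ∀ k, y k = (1 - θ k) • x k + θ k • nesterovAux x θ k) (z : E) (k : ℕ) :
    f (x (k + 1)) - f z ≤ 2 * L * ‖x 0 - z‖ ^ 2 / (k + 2) ^ 2 := by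
  have hθk := nesterov_theta_le hθ0 hθ k
  have hθk_pos := nesterov_theta_pos hθ0 hθ k
  calc f (x (k + 1)) - f z
      ≤ θ k ^ 2 * (L / 2) * (‖x 0 - z‖ ^ 2 - ‖nesterovAux x θ (k + 1) - z‖ ^ 2) :=
        nesterov_gap_le hconv hf hL hlip hθ0 hθ hx hyv z k
    _ ≤ θ k ^ 2 * (L / 2) * ‖x 0 - z‖ ^ 2 := by
        gcongr
        exact sub_le_self _ (sq_nonneg _)
    _ ≤ (2 / (k + 2)) ^ 2 * (L / 2) * ‖x 0 - z‖ ^ 2 := by gcongr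
    _ = 2 * L * ‖x 0 - z‖ ^ 2 / (k + 2) ^ 2 := by rw [div_pow]; ring

end Nesterov

/-- Nesterov's accelerated gradient scheme (Algorithm 1 with `q = 0`, step size `1/L`)
applied to a convex function `f` with `L`-Lipschitz gradient and minimizer `xstar`
satisfies `f (x k) - f xstar ≤ 4 L ‖x 0 - xstar‖² / (k + 2)²`. -/
theorem stmt_0 {n : ℕ} (L : ℝ) (hL : 0 < L)
    (f : EuclideanSpace ℝ (Fin n) → ℝ)
    (hconv : ConvexOn ℝ Set.univ f)
    (hdiff : Differentiable ℝ f)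
    (hlip : ∀ a b : EuclideanSpace ℝ (Fin n),
      ‖gradient f a - gradient f b‖ ≤ L * ‖a - b‖)
    (xstar : EuclideanSpace ℝ (Fin n))
    (hmin : ∀ z, f xstar ≤ f z)
    (x y : ℕ → EuclideanSpace ℝ (Fin n)) (θ β : ℕ → ℝ)
    (hy0 : y 0 = x 0) (hθ0 : θ 0 = 1)
    (hx : ∀ k, x (k + 1) = y k - (1 / L) • gradient f (y k))
    (hθ : ∀ k, 0 < θ (k + 1) ∧ (θ (k + 1)) ^ 2 = (1 - θ (k + 1)) * (θ k) ^ 2)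
    (hβ : ∀ k, β (k + 1) = θ k * (1 - θ k) / ((θ k) ^ 2 + θ (k + 1)))
    (hy : ∀ k, y (k + 1) = x (k + 1) + β (k + 1) • (x (k + 1) - x k)) :
    ∀ k : ℕ, f (x k) - f xstar ≤ 4 * L * ‖x 0 - xstar‖ ^ 2 / ((k : ℝ) + 2) ^ 2 := by
  have hnear := sub_le_of_gradient_eq_zero hdiff hlip
    (IsLocalMin.gradient_eq_zero (.of_forall hmin))
  have hyv := eq_convexComb_nesterovAux hy0 hθ0 hθ hβ hy
  have hR : 0 ≤ L * ‖x 0 - xstar‖ ^ 2 := by positivity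
  intro k
  rcases k with _ | _ | k
  · have := hnear (x 0)
    norm_num
    linarith
  · have hgap := nesterov_gap_le hconv hdiff hL hlip hθ0 hθ hx hyv xstar 0
    simp only [hθ0, nesterovAux, inv_one, one_smul, add_sub_cancel] at hgap
    have := hnear (x 1)
    norm_num
    linarith
  · calc f (x (k + 2)) - f xstar ≤ 2 * L * ‖x 0 - xstar‖ ^ 2 / ((k + 1 : ℕ) + 2) ^ 2 :=
          nesterov_gap_le_div_sq hconv hdiff hL hlip hθ0 hθ hx hyv xstar (k + 1)
      _ ≤ 4 * L * ‖x 0 - xstar‖ ^ 2 / ((k + 2 : ℕ) + 2) ^ 2 := by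
          rw [div_le_div_iff₀ (by positivity) (by positivity)]
          have hk : ((k : ℝ) + 2 + 2) ^ 2 ≤ 2 * ((k : ℝ) + 1 + 2) ^ 2 := by
            nlinarith [k.cast_nonneg (α := ℝ)]
          push_cast
          linarith [mul_le_mul_of_nonneg_left hk hR]
end

section
/- Let 0 < λ < L and β ∈ [0, 1]. The characteristic polynomial p(r) = r² − (1+β)(1 − λ/L)·r + β(1 − λ/L) has a repeated (real) root if and only if β = β*(λ) := (1 − √(λ/L))/(1 + √(λ/L)). -/
/-!
A monic quadratic `x² - b x + c` is a perfect square exactly when its discriminant `b² - 4c`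
vanishes. With `a = 1 - λ/L > 0` and `s = √(λ/L)`, the discriminant of `p` is
`a ((1+β)² (1 - s²) - 4β)`, and `(1+β)² (1 - s²) - 4β` factors as
`((1+s) β - (1-s)) ((1-s) β - (1+s))`. For `β ≤ 1` and `0 < s < 1` the second factor is negative,
so the discriminant vanishes iff `β = (1-s)/(1+s)`.
-/

theorem exists_sq_eq_iff_discrim_eq_zero {K : Type*} [Field K] [NeZero (2 : K)] (b c : K) :
    (∃ r : K, ∀ x : K, x ^ 2 - b * x + c = (x - r) ^ 2) ↔ discrim 1 (-b) c = 0 := by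
  rw [discrim]
  constructor
  · rintro ⟨r, h⟩
    have hc : c = r ^ 2 := by simpa using h 0
    have hb : b = 2 * r := by linear_combination (-(h 1) + hc)
    rw [hb, hc]
    ring
  · intro h
    refine ⟨b / 2, fun x => ?_⟩
    field_simp
    linear_combination -h

/-- The paper's `β*(λ)`, as a function of `q = λ/L`. -/
noncomputable def criticalMomentum (q : ℝ) : ℝ :=
  (1 - Real.sqrt q) / (1 + Real.sqrt q)

theorem one_add_sq_mul_eq_four_mul_iff_eq_criticalMomentum {q β : ℝ} (hq : 0 < q) (hq1 : q ≤ 1)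
    (hβ : β ≤ 1) :
    (1 + β) ^ 2 * (1 - q) = 4 * β ↔ β = criticalMomentum q := by
  set s := Real.sqrt q with hs
  have hs0 : 0 < s := Real.sqrt_pos.mpr hq
  have hsq : s ^ 2 = q := Real.sq_sqrt hq.le
  have hs1 : s ≤ 1 := Real.sqrt_le_one.mpr hq1
  have hfactor : (1 + β) ^ 2 * (1 - q) - 4 * β
      = ((1 + s) * β - (1 - s)) * ((1 - s) * β - (1 + s)) := by
    rw [← hsq]; ring
  have hneg : (1 - s) * β - (1 + s) < 0 := by nlinarith
  rw [criticalMomentum, ← hs, eq_div_iff (by positivity), ← sub_eq_zero, hfactor,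
    mul_eq_zero, or_iff_left hneg.ne, sub_eq_zero, mul_comm]

/-- For `0 < lam < L` and `β ∈ [0,1]`, the characteristic polynomial
`r² - (1+β)(1-lam/L) r + β(1-lam/L)` has a repeated (real) root if and only if
`β = (1 - √(lam/L))/(1 + √(lam/L))`. -/
theorem stmt_8 (L lam β : ℝ) (hlam : 0 < lam) (hlamL : lam < L)
    (hβ : β ∈ Set.Icc (0 : ℝ) 1) :
    (∃ r : ℝ, ∀ x : ℝ,
        x ^ 2 - (1 + β) * (1 - lam / L) * x + β * (1 - lam / L) = (x - r) ^ 2) ↔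
      β = (1 - Real.sqrt (lam / L)) / (1 + Real.sqrt (lam / L)) := by
  have hL : 0 < L := hlam.trans hlamL
  have hq : 0 < lam / L := div_pos hlam hL
  have hq1 : lam / L < 1 := (div_lt_one hL).mpr hlamL
  have hdiscrim : discrim 1 (-((1 + β) * (1 - lam / L))) (β * (1 - lam / L))
      = (1 - lam / L) * ((1 + β) ^ 2 * (1 - lam / L) - 4 * β) := by
    rw [discrim]; ring
  rw [exists_sq_eq_iff_discrim_eq_zero, hdiscrim, mul_eq_zero, or_iff_right (by linarith),
    sub_eq_zero]
  exact one_add_sq_mul_eq_four_mul_iff_eq_criticalMomentum hq hq1.le hβ.2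
end

section
/- Let 0 < λ < L and 0 ≤ β < β* := (1 − √(λ/L))/(1 + √(λ/L)). Then the polynomial r² − (1+β)(1 − λ/L)·r + β(1 − λ/L) has two distinct real roots r₁ > r₂, both roots lie in [0, 1), and the larger root satisfies r₁ > 1 − √(λ/L). -/
/-!
Write `s = √(lam/L) ∈ (0, 1)`, so that `1 - lam/L = (1 - s)(1 + s)` and the momentum bound reads
`β (1 + s) < 1 - s`. The discriminant factors as
`(1 - s²)(1 - s - β(1 + s))(1 + s - β(1 - s)) > 0`, so there are two real roots. Their location
is read off the sign of `p(x) = (x - r₁)(x - r₂)` at three points: `p(0) = β(1 - s²) ≥ 0` and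
`p(1) = s² > 0`, with `0` left and `1` right of the vertex, so both roots lie in `[0, 1)`;
and `p(1 - s) = -s(1 - s)(1 - s - β(1 + s)) < 0`, so `1 - s` lies strictly between the roots.
-/

section RootLocation

variable {α : Type*} [CommRing α] [LinearOrder α] [IsStrictOrderedRing α] {r₁ r₂ y : α}

theorem lt_of_sub_mul_sub_neg (h : (y - r₁) * (y - r₂) < 0) (h₂₁ : r₂ ≤ r₁) : y < r₁ := by
  nlinarith

theorem le_of_sub_mul_sub_nonneg (h : 0 ≤ (y - r₁) * (y - r₂)) (hy : 2 * y ≤ r₁ + r₂) :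
    y ≤ r₂ := by
  nlinarith

theorem lt_of_sub_mul_sub_pos (h : 0 < (y - r₁) * (y - r₂)) (hy : r₁ + r₂ ≤ 2 * y) :
    r₁ < y := by
  nlinarith

end RootLocation

theorem sq_sub_mul_add_eq_sub_mul_sub {b c d : ℝ} (hd : d ^ 2 = b ^ 2 - 4 * c) (x : ℝ) :
    x ^ 2 - b * x + c = (x - (b + d) / 2) * (x - (b - d) / 2) := by
  linear_combination (1 / 4 : ℝ) * hd

theorem overdamped_roots {s β : ℝ} (hs0 : 0 < s) (hs1 : s < 1) (hβ0 : 0 ≤ β)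
    (hβ : β * (1 + s) < 1 - s) :
    ∃ r₁ r₂ : ℝ, r₂ < r₁ ∧
      (∀ x : ℝ, x ^ 2 - (1 + β) * (1 - s ^ 2) * x + β * (1 - s ^ 2) = (x - r₁) * (x - r₂)) ∧
      0 ≤ r₂ ∧ r₁ < 1 ∧ 1 - s < r₁ := by
  set b := (1 + β) * (1 - s ^ 2)
  set c := β * (1 - s ^ 2)
  have hc : 0 < 1 - s ^ 2 := by nlinarith
  have hβ1 : β < 1 := by nlinarith
  have hdiscrim : 0 < b ^ 2 - 4 * c := by
    have : b ^ 2 - 4 * c = (1 - s ^ 2) * ((1 - s - β * (1 + s)) * (1 + s - β * (1 - s))) := by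
      ring
    rw [this]
    exact mul_pos hc (mul_pos (by linarith) (by nlinarith))
  obtain ⟨d, hd, hd2⟩ : ∃ d : ℝ, 0 < d ∧ d ^ 2 = b ^ 2 - 4 * c :=
    ⟨√(b ^ 2 - 4 * c), Real.sqrt_pos.mpr hdiscrim, Real.sq_sqrt hdiscrim.le⟩
  have hfactor := sq_sub_mul_add_eq_sub_mul_sub hd2
  refine ⟨(b + d) / 2, (b - d) / 2, by linarith, hfactor, ?_, ?_, ?_⟩
  · refine le_of_sub_mul_sub_nonneg (r₁ := (b + d) / 2) ?_ (by nlinarith)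
    rw [← hfactor]
    nlinarith
  · refine lt_of_sub_mul_sub_pos (r₂ := (b - d) / 2) ?_ (by nlinarith)
    rw [← hfactor]
    nlinarith
  · refine lt_of_sub_mul_sub_neg (r₂ := (b - d) / 2) ?_ (by linarith)
    rw [← hfactor]
    have : (1 - s) ^ 2 - b * (1 - s) + c = -(s * (1 - s) * (1 - s - β * (1 + s))) := by ring
    rw [this, neg_neg_iff_pos]
    exact mul_pos (mul_pos hs0 (by linarith)) (by linarith)

/-- Over-damped (low momentum) case `0 ≤ β < β* = (1 - √(lam/L))/(1 + √(lam/L))`: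
the polynomial `r² - (1+β)(1-lam/L) r + β(1-lam/L)` has two distinct real roots
`r₁ > r₂`, both in `[0,1)`, and the larger root satisfies `r₁ > 1 - √(lam/L)`. -/
theorem stmt_10 (L lam β : ℝ) (hlam : 0 < lam) (hlamL : lam < L)
    (hβ0 : 0 ≤ β)
    (hβ : β < (1 - Real.sqrt (lam / L)) / (1 + Real.sqrt (lam / L))) :
    ∃ r₁ r₂ : ℝ, r₂ < r₁ ∧
      (∀ x : ℝ, x ^ 2 - (1 + β) * (1 - lam / L) * x + β * (1 - lam / L)
        = (x - r₁) * (x - r₂)) ∧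
      0 ≤ r₂ ∧ r₁ < 1 ∧ 1 - Real.sqrt (lam / L) < r₁ := by
  have hL : 0 < L := hlam.trans hlamL
  have ht : 0 < lam / L := div_pos hlam hL
  have ht1 : lam / L < 1 := (div_lt_one hL).mpr hlamL
  have hsq : √(lam / L) ^ 2 = lam / L := Real.sq_sqrt ht.le
  have hs0 : 0 < √(lam / L) := Real.sqrt_pos.mpr ht
  have hs1 : √(lam / L) < 1 := (Real.sqrt_lt' one_pos).mpr (by rwa [one_pow])
  have hβ' : β * (1 + √(lam / L)) < 1 - √(lam / L) := (lt_div_iff₀ (by positivity)).mp hβ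
  simpa only [hsq] using overdamped_roots hs0 hs1 hβ0 hβ'
end

section
/- Let 0 < λ < L and β*(λ) := (1 − √(λ/L))/(1 + √(λ/L)) < β ≤ 1. Then the polynomial r² − (1+β)(1 − λ/L)·r + β(1 − λ/L) has two non-real complex-conjugate roots, and each root has modulus √(β(1 − λ/L)) < 1. -/
/-!
With `s = √(λ/L)` and `c = 1 - λ/L = 1 - s²`, the discriminant `(1 + β)²c² - 4βc` is negative
exactly when `β` lies strictly between `(1 - s)/(1 + s)` and `(1 + s)/(1 - s)`. A real quadratic
with negative discriminant has a conjugate pair of roots `r, r̄`, and `|r|² = r r̄ = βc < 1`.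
-/

open Complex ComplexConjugate

theorem Complex.sub_mul_sub_conj (r x : ℂ) :
    (x - r) * (x - conj r) = x ^ 2 - ((2 * r.re : ℝ) : ℂ) * x + (normSq r : ℂ) := by
  rw [← mul_conj, ← add_conj]
  ring

theorem exists_conj_roots_of_discrim_neg {p q : ℝ} (h : p ^ 2 < 4 * q) :
    ∃ r : ℂ, r.im ≠ 0 ∧
      (∀ x : ℂ, x ^ 2 - (p : ℂ) * x + (q : ℂ) = (x - r) * (x - conj r)) ∧
      ‖r‖ = Real.sqrt q := by
  have hD : 0 < q - (p / 2) ^ 2 := by linarith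
  set b := Real.sqrt (q - (p / 2) ^ 2)
  have hnormSq : normSq ⟨p / 2, b⟩ = q := by
    rw [normSq_mk, ← sq, ← sq, Real.sq_sqrt hD.le]
    ring
  refine ⟨⟨p / 2, b⟩, (Real.sqrt_pos.mpr hD).ne', fun x ↦ ?_, ?_⟩
  · rw [Complex.sub_mul_sub_conj, hnormSq, mul_div_cancel₀ p two_ne_zero]
  · rw [norm_def, hnormSq]

-- `4β - (1 + β)²(1 - s²) = ((1 + s)β - (1 - s)) ((1 + s) - (1 - s)β)`, and both factors are positive.
theorem one_add_sq_mul_one_sub_sq_lt {s β : ℝ} (hlow : 1 - s < (1 + s) * β)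
    (hβ : β ≤ 1) : (1 + β) ^ 2 * (1 - s ^ 2) < 4 * β := by
  have hup : 0 < (1 + s) - (1 - s) * β := by nlinarith
  nlinarith [mul_pos (sub_pos.mpr hlow) hup]

/-- Under-damped (high momentum) case `β* = (1 - √(lam/L))/(1 + √(lam/L)) < β ≤ 1`:
the polynomial `r² - (1+β)(1-lam/L) r + β(1-lam/L)` has two non-real complex-conjugate
roots, each of modulus `√(β(1-lam/L)) < 1`. -/
theorem stmt_11 (L lam β : ℝ) (hlam : 0 < lam) (hlamL : lam < L)
    (hβl : (1 - Real.sqrt (lam / L)) / (1 + Real.sqrt (lam / L)) < β)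
    (hβu : β ≤ 1) :
    ∃ r : ℂ, r.im ≠ 0 ∧
      (∀ x : ℂ, x ^ 2 - (((1 + β) * (1 - lam / L) : ℝ) : ℂ) * x
          + ((β * (1 - lam / L) : ℝ) : ℂ)
        = (x - r) * (x - (starRingEnd ℂ) r)) ∧
      ‖r‖ = Real.sqrt (β * (1 - lam / L)) ∧
      Real.sqrt (β * (1 - lam / L)) < 1 := by
  have hL : 0 < L := hlam.trans hlamL
  have hκ : 0 < lam / L := div_pos hlam hL
  have hc : 0 < 1 - lam / L := sub_pos.mpr ((div_lt_one hL).mpr hlamL)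
  set s := Real.sqrt (lam / L)
  have hs : 0 < s := Real.sqrt_pos.mpr hκ
  have hlow : 1 - s < (1 + s) * β := by
    rwa [div_lt_iff₀' (by positivity)] at hβl
  have hdisc : ((1 + β) * (1 - lam / L)) ^ 2 < 4 * (β * (1 - lam / L)) := by
    have := one_add_sq_mul_one_sub_sq_lt hlow hβu
    rw [Real.sq_sqrt hκ.le] at this
    nlinarith
  obtain ⟨r, hr_im, hr_factor, hr_norm⟩ := exists_conj_roots_of_discrim_neg hdisc
  refine ⟨r, hr_im, hr_factor, hr_norm, ?_⟩
  rw [Real.sqrt_lt' one_pos]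
  nlinarith
end

section
/- Fix q ∈ (0, 1) and define θ₀ = 1 and, for each k ≥ 0, θ_{k+1} as the unique root in (0, 1] of θ² = (1 − θ)θ_k² + q·θ. Then the sequence (θ_k) is strictly decreasing, satisfies θ_k > √q for all k, and converges to √q; consequently β_{k+1} = θ_k(1 − θ_k)/(θ_k² + θ_{k+1}) converges to β* = (1 − √q)/(1 + √q). -/
/-!
The recurrence is equivalent to `θ_{k+1}² - q = (1 - θ_{k+1}) (θ_k² - q)`. Since
`θ_{k+1} ∈ (0, 1)`, the gap `θ_k² - q` stays positive and strictly shrinks, so `θ_k`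
decreases and stays above `√q`. Its limit `L ≥ √q > 0` satisfies the same relation,
i.e. `L (L² - q) = 0`, hence `L = √q`, and `β_{k+1} → √q (1 - √q) / (q + √q)` by continuity.
-/

open Filter Topology

namespace NesterovTheta

section Step

variable {q a b : ℝ}

theorem sq_sub_eq_of_step (h : b ^ 2 = (1 - b) * a ^ 2 + q * b) :
    b ^ 2 - q = (1 - b) * (a ^ 2 - q) := by
  linear_combination h

theorem lt_sq_and_sq_lt_of_step (hq1 : q < 1) (ha : q < a ^ 2) (hb0 : 0 < b) (hb1 : b ≤ 1)
    (h : b ^ 2 = (1 - b) * a ^ 2 + q * b) : q < b ^ 2 ∧ b ^ 2 < a ^ 2 := by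
  have hb1' : b < 1 := hb1.lt_of_ne (by rintro rfl; norm_num at h; linarith)
  have hgap := sq_sub_eq_of_step h
  constructor <;> nlinarith [mul_pos (sub_pos.2 hb1') (sub_pos.2 ha), mul_pos hb0 (sub_pos.2 ha)]

theorem eq_sqrt_of_fixed_point (hb : 0 < b) (h : b ^ 2 = (1 - b) * b ^ 2 + q * b) :
    b = Real.sqrt q := by
  have hprod : b * (b ^ 2 - q) = 0 := by linear_combination h
  have hsq : b ^ 2 = q := by
    rcases mul_eq_zero.mp hprod with h0 | h0
    · exact absurd h0 hb.ne'
    · linarith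
  rw [← hsq, Real.sqrt_sq hb.le]

end Step

section Sequence

variable {q : ℝ} {θ : ℕ → ℝ}

theorem pos_of_step (hθ0 : θ 0 = 1) (hθ : ∀ k, θ (k + 1) ∈ Set.Ioc (0 : ℝ) 1) (k : ℕ) :
    0 < θ k := by
  cases k with
  | zero => rw [hθ0]; exact one_pos
  | succ k => exact (hθ k).1

theorem lt_sq_of_step (hq1 : q < 1) (hθ0 : θ 0 = 1)
    (hθ : ∀ k, θ (k + 1) ∈ Set.Ioc (0 : ℝ) 1 ∧
      θ (k + 1) ^ 2 = (1 - θ (k + 1)) * θ k ^ 2 + q * θ (k + 1)) (k : ℕ) :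
    q < θ k ^ 2 := by
  induction k with
  | zero => rw [hθ0]; simpa using hq1
  | succ k ih =>
    obtain ⟨⟨hpos, hle⟩, hrec⟩ := hθ k
    exact (lt_sq_and_sq_lt_of_step hq1 ih hpos hle hrec).1

theorem fixed_point_of_tendsto {L : ℝ} (hL : Tendsto θ atTop (𝓝 L))
    (hrec : ∀ k, θ (k + 1) ^ 2 = (1 - θ (k + 1)) * θ k ^ 2 + q * θ (k + 1)) :
    L ^ 2 = (1 - L) * L ^ 2 + q * L := by
  have hL' : Tendsto (fun k => θ (k + 1)) atTop (𝓝 L) := hL.comp (tendsto_add_atTop_nat 1)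
  have hrhs : Tendsto (fun k => (1 - θ (k + 1)) * θ k ^ 2 + q * θ (k + 1)) atTop
      (𝓝 ((1 - L) * L ^ 2 + q * L)) :=
    ((tendsto_const_nhds.sub hL').mul (hL.pow 2)).add (tendsto_const_nhds.mul hL')
  rw [← funext hrec] at hrhs
  exact tendsto_nhds_unique (hL'.pow 2) hrhs

theorem tendsto_sqrt_of_step (hq0 : 0 < q) (hanti : Antitone θ)
    (hgt : ∀ k, Real.sqrt q ≤ θ k)
    (hrec : ∀ k, θ (k + 1) ^ 2 = (1 - θ (k + 1)) * θ k ^ 2 + q * θ (k + 1)) :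
    Tendsto θ atTop (𝓝 (Real.sqrt q)) := by
  have hlim := tendsto_atTop_ciInf hanti ⟨Real.sqrt q, by rintro _ ⟨k, rfl⟩; exact hgt k⟩
  have hpos : 0 < ⨅ k, θ k := (Real.sqrt_pos.2 hq0).trans_le (le_ciInf hgt)
  rwa [← eq_sqrt_of_fixed_point hpos (fixed_point_of_tendsto hlim hrec)]

theorem tendsto_momentum {s : ℝ} (hs : 0 < s) (hθ : Tendsto θ atTop (𝓝 s)) :
    Tendsto (fun k => θ k * (1 - θ k) / (θ k ^ 2 + θ (k + 1))) atTop
      (𝓝 ((1 - s) / (1 + s))) := by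
  have hnum := hθ.mul ((tendsto_const_nhds (x := (1 : ℝ))).sub hθ)
  have hden := (hθ.pow 2).add (hθ.comp (tendsto_add_atTop_nat 1))
  have hlim : s * (1 - s) / (s ^ 2 + s) = (1 - s) / (1 + s) := by
    rw [show s ^ 2 + s = s * (1 + s) by ring, mul_div_mul_left _ _ hs.ne']
  rw [← hlim]
  exact hnum.div hden (by positivity)

end Sequence

end NesterovTheta

open NesterovTheta in
/-- For `q ∈ (0,1)`, the sequence `θ 0 = 1`, `θ (k+1)` the root in `(0,1]` of
`θ² = (1 - θ) (θ k)² + q θ`, is strictly decreasing, stays above `√q`, and converges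
to `√q`; consequently the momentum `β (k+1) = θ k (1 - θ k)/((θ k)² + θ (k+1))`
converges to `β* = (1 - √q)/(1 + √q)`. -/
theorem stmt_16 (q : ℝ) (hq0 : 0 < q) (hq1 : q < 1) (θ : ℕ → ℝ)
    (hθ0 : θ 0 = 1)
    (hθ : ∀ k, θ (k + 1) ∈ Set.Ioc (0 : ℝ) 1 ∧
      (θ (k + 1)) ^ 2 = (1 - θ (k + 1)) * (θ k) ^ 2 + q * θ (k + 1)) :
    StrictAnti θ ∧ (∀ k, Real.sqrt q < θ k) ∧
    Filter.Tendsto θ Filter.atTop (nhds (Real.sqrt q)) ∧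
    Filter.Tendsto (fun k => θ k * (1 - θ k) / ((θ k) ^ 2 + θ (k + 1)))
      Filter.atTop (nhds ((1 - Real.sqrt q) / (1 + Real.sqrt q))) := by
  have hrec k := (hθ k).2
  have hpos := pos_of_step hθ0 fun k => (hθ k).1
  have hsq := lt_sq_of_step hq1 hθ0 hθ
  have hgt k : Real.sqrt q < θ k := (Real.sqrt_lt' (hpos k)).2 (hsq k)
  have hanti : StrictAnti θ := strictAnti_nat_of_succ_lt fun k =>
    (pow_lt_pow_iff_left₀ (hpos _).le (hpos k).le two_ne_zero).1
      (lt_sq_and_sq_lt_of_step hq1 (hsq k) (hθ k).1.1 (hθ k).1.2 (hrec k)).2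
  have hlim := tendsto_sqrt_of_step hq0 hanti.antitone (fun k => (hgt k).le) hrec
  exact ⟨hanti, hgt, hlim, tendsto_momentum (Real.sqrt_pos.2 hq0) hlim⟩
end
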